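/- Let G be a graph and let T be an induced subtree of G on at least 4 vertices such that every vertex of T has odd degree within T. Let r be any vertex of T and let B = (G, β) be any bicolored graph on G. Then there exists a string w of vertices of T such that |w| = 4|V(T)| - 4, B_w = B^{V(T)} (the underlying graph is unchanged and exactly the colors of the vertices of T are flipped), and w ends with r. -/

import Mathlib

open Classical

noncomputable section

/-- The local complement of a simple graph `G` at a vertex `a`: adjacency is toggled
between every pair of distinct neighbors of `a`, all other adjacencies unchanged. -/
def localComp {V : Type*} (G : SimpleGraph V) (a : V) : SimpleGraph V where
  Adj x y := (G.Adj a x ∧ G.Adj a y ∧ x ≠ y ∧ ¬ G.Adj x y) ∨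
             (G.Adj x y ∧ ¬ (G.Adj a x ∧ G.Adj a y))
  symm := by
    constructor
    intro x y h
    rcases h with ⟨hx, hy, hne, hna⟩ | ⟨h, hn⟩
    · exact Or.inl ⟨hy, hx, hne.symm, fun h' => hna h'.symm⟩
    · exact Or.inr ⟨h.symm, fun h' => hn ⟨h'.2, h'.1⟩⟩
  loopless := by
    constructor
    intro x h
    rcases h with ⟨_, _, hne, _⟩ | ⟨h, _⟩
    · exact hne rfl
    · exact G.irrefl h

/-- A bicolored graph: a simple graph together with a `{-1,1}`-coloring (units of ℤ). -/
abbrev Bicolored (V : Type*) := SimpleGraph V × (V → ℤˣ)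

/-- Local inversion at a vertex `a`: locally complement the graph at `a` and flip
the colors of all neighbors of `a`. -/
def localInv {V : Type*} (B : Bicolored V) (a : V) : Bicolored V :=
  (localComp B.1 a, fun v => if B.1.Adj a v then - B.2 v else B.2 v)

/-- Sequential local inversion along a string (list) of vertices. -/
def invSeq {V : Type*} (B : Bicolored V) (w : List V) : Bicolored V :=
  w.foldl localInv B

/-- `flipOn B S` keeps the underlying graph and flips the colors exactly on `S`. -/
def flipOn {V : Type*} (B : Bicolored V) (S : Set V) : Bicolored V :=
  (B.1, fun v => if v ∈ S then - B.2 v else B.2 v)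

end

/-!
Induction on `|T|`. An odd tree on four vertices is the claw `K_{1,3}`, and explicit words of
length 12 ending at any prescribed vertex of a claw do the job. A larger odd tree has even order
(handshake lemma), hence at least six vertices; a non-leaf `v` farthest from `r` has degree at
least 3 and at most one neighbour closer to `r`, so two of its neighbours `a, b` are leaves
different from `r`.
The word `v a b a b a b v` restores the graph and flips exactly the colors of `a` and `b`, and
`T - {a, b}` is an odd tree on `|T| - 2` vertices containing `r`: since `8 + 4 (|T| - 2) - 4 =
4 |T| - 4`, the word for `T - {a, b}` appended to it works for `T`.

The fixed words are checked by evaluation: a local inversion at a vertex of an embedded graph `K`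
acts on any other vertex only through its neighbourhood in `K`, so the effect of a word over `K`
on an arbitrary ambient graph is a finite Boolean computation (`CoreState`), settled by `decide`.
-/

open Finset SimpleGraph

section LocalInversion

variable {V : Type*}

lemma decide_localInv_adj (B : Bicolored V) (a x y : V) :
    decide ((localInv B a).1.Adj x y) = (decide (x ≠ y) &&
      xor (decide (B.1.Adj x y)) (decide (B.1.Adj a x) && decide (B.1.Adj a y))) := by
  by_cases hxy : x = y
  · subst hxy; simp [localInv, localComp]
  · by_cases h : B.1.Adj x y <;> simp [localInv, localComp, hxy, h]

lemma invSeq_append (B : Bicolored V) (w₁ w₂ : List V) :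
    invSeq B (w₁ ++ w₂) = invSeq (invSeq B w₁) w₂ :=
  List.foldl_append ..

lemma ite_neg_ite {α : Type*} [InvolutiveNeg α] (p : Prop) [Decidable p] (b : Bool) (x : α) :
    (if p then -(if b then -x else x) else (if b then -x else x)) =
      if xor b (decide p) then -x else x := by
  by_cases hp : p <;> cases b <;> simp [hp]

lemma flipOn_flipOn (B : Bicolored V) {S T : Set V} (h : Disjoint S T) :
    flipOn (flipOn B S) T = flipOn B (S ∪ T) := by
  refine Prod.ext rfl (funext fun v => ?_)
  by_cases hS : v ∈ S <;> by_cases hT : v ∈ T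
  · exact absurd (h.notMem_of_mem_left hS) (not_not.mpr hT)
  all_goals simp [flipOn, hS, hT]

end LocalInversion

/-- The effect of a word of local inversions at the vertices of an embedded copy of a graph `K`
on `Fin m`. A vertex outside the copy is abstracted by its *type*, the set of copy vertices it is
initially adjacent to: its adjacencies to the copy, its color, and whether its adjacency to another
outside vertex has been toggled depend only on the types involved. -/
structure CoreState (m : ℕ) where
  adj : Fin m → Fin m → Bool
  typeAdj : (Fin m → Bool) → Fin m → Bool
  pairFlip : (Fin m → Bool) → (Fin m → Bool) → Bool
  typeFlip : (Fin m → Bool) → Bool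
  coreFlip : Fin m → Bool

namespace CoreState

variable {m : ℕ}

def step (S : CoreState m) (a : Fin m) : CoreState m where
  adj i j := decide (i ≠ j) && xor (S.adj i j) (S.adj a i && S.adj a j)
  typeAdj τ i := xor (S.typeAdj τ i) (S.typeAdj τ a && S.adj a i)
  pairFlip τ σ := xor (S.pairFlip τ σ) (S.typeAdj τ a && S.typeAdj σ a)
  typeFlip τ := xor (S.typeFlip τ) (S.typeAdj τ a)
  coreFlip i := xor (S.coreFlip i) (S.adj a i)

def init (K : SimpleGraph (Fin m)) [DecidableRel K.Adj] : CoreState m where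
  adj i j := decide (K.Adj i j)
  typeAdj τ := τ
  pairFlip _ _ := false
  typeFlip _ := false
  coreFlip _ := false

def run (K : SimpleGraph (Fin m)) [DecidableRel K.Adj] (w : List (Fin m)) : CoreState m :=
  w.foldl step (init K)

-- reducible, so that `decide` finds the `Decidable` instance
abbrev IsFlip (K : SimpleGraph (Fin m)) [DecidableRel K.Adj] (S : CoreState m)
    (χ : Fin m → Bool) : Prop :=
  S.adj = (init K).adj ∧ S.typeAdj = (init K).typeAdj ∧ S.pairFlip = (init K).pairFlip ∧
    S.typeFlip = (init K).typeFlip ∧ S.coreFlip = χ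

variable {V : Type*} {K : SimpleGraph (Fin m)} {G : SimpleGraph V} (f : K ↪g G)

noncomputable def type (v : V) : Fin m → Bool := fun j => decide (G.Adj (f j) v)

def Represents (β : V → ℤˣ) (B : Bicolored V) (S : CoreState m) : Prop :=
  (∀ i j, decide (B.1.Adj (f i) (f j)) = S.adj i j) ∧
  (∀ i, ∀ v ∉ Set.range f, decide (B.1.Adj (f i) v) = S.typeAdj (type f v) i) ∧
  (∀ v ∉ Set.range f, ∀ w ∉ Set.range f, v ≠ w →
      decide (B.1.Adj v w) = xor (decide (G.Adj v w)) (S.pairFlip (type f v) (type f w))) ∧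
  (∀ v ∉ Set.range f, B.2 v = if S.typeFlip (type f v) then -β v else β v) ∧
  (∀ i, B.2 (f i) = if S.coreFlip i then -β (f i) else β (f i))

lemma represents_init [DecidableRel K.Adj] (β : V → ℤˣ) :
    Represents f β (G, β) (init K) := by
  simp [Represents, init, type]

lemma represents_step (β : V → ℤˣ) {B : Bicolored V} {S : CoreState m} (a : Fin m)
    (h : Represents f β B S) : Represents f β (localInv B (f a)) (S.step a) := by
  obtain ⟨hadj, htype, hpair, hcolor, hcore⟩ := h
  refine ⟨fun i j => ?_, fun i v hv => ?_, fun v hv w hw hvw => ?_, fun v hv => ?_, fun i => ?_⟩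
  · simp only [decide_localInv_adj, hadj, f.injective.ne_iff, step]
  · have hiv : f i ≠ v := fun h => hv ⟨i, h⟩
    simp only [decide_localInv_adj, htype _ v hv, hadj, decide_eq_true hiv, Bool.true_and, step,
      Bool.and_comm]
  · simp only [decide_localInv_adj, htype _ v hv, htype _ w hw, hpair v hv w hw hvw,
      decide_eq_true hvw, Bool.true_and, step, Bool.xor_assoc]
  · simp only [localInv, step, ← htype a v hv, hcolor v hv, ite_neg_ite]
  · simp only [localInv, step, ← hadj a i, hcore i, ite_neg_ite]

lemma represents_run [DecidableRel K.Adj] (β : V → ℤˣ) (w : List (Fin m)) :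
    Represents f β (invSeq (G, β) (w.map f)) (run K w) := by
  induction w using List.reverseRecOn with
  | nil => exact represents_init f β
  | append_singleton w a ih =>
    rw [List.map_append, invSeq_append, run, List.foldl_append]
    exact represents_step f β a ih

theorem invSeq_map_eq_flipOn [DecidableRel K.Adj] (β : V → ℤˣ) {w : List (Fin m)}
    {χ : Fin m → Bool} (hw : IsFlip K (run K w) χ) :
    invSeq (G, β) (w.map f) = flipOn (G, β) (f '' {i | χ i}) := by
  obtain ⟨hadj, htype, hpair, hcolor, hcore⟩ := represents_run f β w
  obtain ⟨hA, hT, hP, hF, hC⟩ := hw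
  simp only [hA, hT, hP, hF, hC, init, type] at hadj htype hpair hcolor hcore
  set B := invSeq (G, β) (w.map f)
  refine Prod.ext ?_ (funext fun v => ?_)
  · show B.1 = G
    ext u v
    rw [← decide_eq_decide]
    by_cases hu : u ∈ Set.range f <;> by_cases hv : v ∈ Set.range f
    · obtain ⟨i, rfl⟩ := hu
      obtain ⟨j, rfl⟩ := hv
      simp [hadj]
    · obtain ⟨i, rfl⟩ := hu
      exact htype i v hv
    · obtain ⟨j, rfl⟩ := hv
      rw [B.1.adj_comm, G.adj_comm]
      exact htype j u hu
    · by_cases huv : u = v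
      · simp [huv]
      · simpa using hpair u hu v hv huv
  · show B.2 v = if v ∈ f '' {i | χ i} then -β v else β v
    by_cases hv : v ∈ Set.range f
    · obtain ⟨i, rfl⟩ := hv
      simp [hcore, f.injective.mem_set_image]
    · have hv' : v ∉ f '' {i | χ i} := fun h => hv (Set.image_subset_range _ _ h)
      simp [hcolor v hv, hv']

end CoreState

section Words

open CoreState

variable {V : Type*} {G : SimpleGraph V}

lemma exists_run_isFlip_starGraph_four (k : Fin 4) :
    ∃ u : List (Fin 4), u.length = 12 ∧ u.getLast? = some k ∧
      IsFlip (starGraph 0) (run (starGraph 0) u) (fun _ => true) := by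
  fin_cases k
  · exact ⟨[1, 0, 1, 0, 1, 2, 3, 2, 3, 2, 3, 0], rfl, rfl, by decide⟩
  · exact ⟨[0, 1, 0, 1, 2, 3, 2, 3, 2, 3, 0, 1], rfl, rfl, by decide⟩
  · exact ⟨[0, 2, 0, 2, 1, 3, 1, 3, 1, 3, 0, 2], rfl, rfl, by decide⟩
  · exact ⟨[0, 3, 0, 3, 1, 2, 1, 2, 1, 2, 0, 3], rfl, rfl, by decide⟩

lemma exists_flip_word_starGraph_four (f : starGraph (0 : Fin 4) ↪g G)
    (β : V → ℤˣ) (k : Fin 4) :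
    ∃ w : List V, (∀ x ∈ w, x ∈ Set.range f) ∧ w.length = 12 ∧
      invSeq (G, β) w = flipOn (G, β) (Set.range f) ∧ w.getLast? = some (f k) := by
  obtain ⟨u, hlen, hlast, hflip⟩ := exists_run_isFlip_starGraph_four k
  refine ⟨u.map f, by simp, by simp [hlen], ?_, by simp [List.getLast?_map, hlast]⟩
  rw [invSeq_map_eq_flipOn f β hflip]
  simp

theorem invSeq_cherry {p a b : V} (hpa : G.Adj p a) (hpb : G.Adj p b) (hab : a ≠ b)
    (hnab : ¬ G.Adj a b) (β : V → ℤˣ) :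
    invSeq (G, β) [p, a, b, a, b, a, b, p] = flipOn (G, β) {a, b} := by
  have hp : p ≠ a ∧ p ≠ b := ⟨G.ne_of_adj hpa, G.ne_of_adj hpb⟩
  obtain ⟨f, hf⟩ : ∃ f : starGraph (0 : Fin 3) ↪g G, ⇑f = ![p, a, b] := by
    refine ⟨⟨⟨![p, a, b], fun i j hij => ?_⟩, fun {i j} => ?_⟩, rfl⟩
    · fin_cases i <;> fin_cases j <;> simp_all [eq_comm]
    · show G.Adj (![p, a, b] i) (![p, a, b] j) ↔ _
      fin_cases i <;> fin_cases j <;> simp [hpa, hpb, hnab, hpa.symm, hpb.symm, G.adj_comm b a]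
  have hflip := invSeq_map_eq_flipOn f β (w := [0, 1, 2, 1, 2, 1, 2, 0])
    (χ := ![false, true, true]) (by decide)
  have himage : ⇑f '' {i | ![false, true, true] i} = {a, b} := by
    ext v
    simp [hf, Fin.exists_fin_succ, eq_comm (b := v)]
  have hword : [0, 1, 2, 1, 2, 1, 2, 0].map f = [p, a, b, a, b, a, b, p] := by simp [hf]
  rwa [hword, himage] at hflip

end Words

namespace SimpleGraph

variable {W : Type*} {T : SimpleGraph W}

lemma even_card_of_forall_odd_degree [Fintype W] [DecidableRel T.Adj]
    (hodd : ∀ v, Odd (T.degree v)) : Even (Fintype.card W) := by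
  simpa [hodd] using T.even_card_odd_degree_vertices

lemma IsTree.exists_one_lt_degree [Fintype W] [DecidableRel T.Adj] (hT : T.IsTree)
    (hW : 2 < Fintype.card W) : ∃ v, 1 < T.degree v := by
  by_contra! hle
  have : Nontrivial W := Fintype.one_lt_card_iff_nontrivial.mp (by omega)
  have hone : ∀ v, T.degree v = 1 := fun v => le_antisymm (hle v)
    (hT.preconnected.minDegree_pos_of_nontrivial.trans_le (T.minDegree_le_degree v))
  have hsum := T.sum_degrees_eq_twice_card_edges
  have hedges := hT.card_edgeFinset
  simp only [hone, sum_const, card_univ, smul_eq_mul, mul_one] at hsum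
  omega

lemma IsTree.eq_penultimate_of_dist_lt (hT : T.IsTree) {r v u : W} {p : T.Walk r v}
    (hp : p.IsPath) (hadj : T.Adj v u) (hlt : T.dist r u < T.dist r v) : u = p.penultimate := by
  refine hT.isAcyclic.eq_penultimate_of_adj_end hp hadj ?_
  obtain ⟨q, hq, hqlen⟩ := hT.connected.exists_path_of_dist r u
  refine hT.isAcyclic.mem_support_of_ne_mem_support_of_adj_of_isPath hp hq hadj fun hv => ?_
  have := (dist_le (q.takeUntil v hv)).trans (q.length_takeUntil_le_length hv)
  omega

lemma IsTree.exists_adj_leaves [Fintype W] [DecidableRel T.Adj] (hT : T.IsTree)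
    (hodd : ∀ v, Odd (T.degree v)) (hW : 2 < Fintype.card W) (r : W) :
    ∃ v a b, a ≠ b ∧ a ≠ r ∧ b ≠ r ∧ T.Adj v a ∧ T.Adj v b ∧
      T.degree a = 1 ∧ T.degree b = 1 := by
  obtain ⟨v, hv, hmax⟩ := exists_max_image {v | 1 < T.degree v} (T.dist r)
    (by simpa [Finset.Nonempty] using hT.exists_one_lt_degree hW)
  have hv : 1 < T.degree v := by simpa using hv
  obtain ⟨p, hp⟩ := hT.connected r v |>.exists_isPath
  have hnear : ((T.neighborFinset v).filter (fun u => ¬ T.dist r v < T.dist r u)).card ≤ 1 := by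
    refine card_le_one.mpr fun a ha b hb => ?_
    simp only [mem_filter, mem_neighborFinset, not_lt] at ha hb
    have hlt : ∀ u, T.Adj v u → T.dist r u ≤ T.dist r v → T.dist r u < T.dist r v :=
      fun u hu hle => lt_of_le_of_ne hle (hT.dist_ne_of_adj r hu).symm
    rw [hT.eq_penultimate_of_dist_lt hp ha.1 (hlt a ha.1 ha.2),
      hT.eq_penultimate_of_dist_lt hp hb.1 (hlt b hb.1 hb.2)]
  have hfar : 1 < ((T.neighborFinset v).filter (fun u => T.dist r v < T.dist r u)).card := by
    have hsplit := card_filter_add_card_filter_not (s := T.neighborFinset v)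
      (fun u => T.dist r v < T.dist r u)
    have h3 : 3 ≤ T.degree v := by obtain ⟨k, hk⟩ := hodd v; omega
    rw [card_neighborFinset_eq_degree] at hsplit
    omega
  have hleaf : ∀ u ∈ (T.neighborFinset v).filter (fun u => T.dist r v < T.dist r u),
      u ≠ r ∧ T.Adj v u ∧ T.degree u = 1 := by
    intro u hu
    simp only [mem_filter, mem_neighborFinset] at hu
    refine ⟨fun h => by simp [h] at hu, hu.1, ?_⟩
    have hpos : 0 < T.degree u := (T.degree_pos_iff_exists_adj u).mpr ⟨v, hu.1.symm⟩
    have : ¬ 1 < T.degree u := fun h => (hmax u (by simpa using h)).not_gt hu.2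
    omega
  obtain ⟨a, ha, b, hb, hab⟩ := one_lt_card.mp hfar
  obtain ⟨har, hva, hda⟩ := hleaf a ha
  obtain ⟨hbr, hvb, hdb⟩ := hleaf b hb
  exact ⟨v, a, b, hab, har, hbr, hva, hvb, hda, hdb⟩

lemma IsTree.eq_starGraph_of_card_eq_four [Fintype W] [DecidableRel T.Adj] (hT : T.IsTree)
    (hodd : ∀ v, Odd (T.degree v)) (hW : Fintype.card W = 4) : ∃ c, T = starGraph c := by
  obtain ⟨c, hc⟩ := hT.exists_one_lt_degree (by omega)
  have hdeg : T.degree c = Fintype.card W - 1 := by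
    have := T.degree_lt_card_verts c
    obtain ⟨k, hk⟩ := hodd c
    omega
  have hcu : ∀ u, c ≠ u → T.Adj c u := by
    intro u hu
    rw [← card_neighborFinset_eq_degree, ← card_univ, ← card_erase_of_mem
      (mem_univ c)] at hdeg
    have := eq_of_subset_of_card_le (fun x hx => mem_erase.mpr
      ⟨(T.ne_of_adj ((T.mem_neighborFinset c x).mp hx)).symm, mem_univ x⟩) hdeg.ge
    rw [← mem_neighborFinset, this]
    simpa using hu.symm
  refine ⟨c, SimpleGraph.ext (funext₂ fun x y => propext ?_)⟩
  rw [starGraph_adj]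
  refine ⟨fun h => ⟨T.ne_of_adj h, ?_⟩, ?_⟩
  · by_contra! hxy
    exact hT.isAcyclic.cliqueFree le_rfl {c, x, y} (is3Clique_triple_iff.mpr
      ⟨hcu x (Ne.symm hxy.1), hcu y (Ne.symm hxy.2), h⟩)
  · rintro ⟨hxy, rfl | rfl⟩
    · exact hcu y hxy
    · exact (hcu x hxy.symm).symm

variable {V : Type*} {G : SimpleGraph V}

lemma degree_induce_eq_card_filter (s : Finset V) {v : V} (hv : v ∈ s) :
    (G.induce (s : Set V)).degree ⟨v, hv⟩ = #(s.filter (G.Adj v)) := by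
  rw [← card_neighborFinset_eq_degree]
  refine card_bij (fun x _ => x.1) (fun x hx => ?_) (fun x _ y _ => Subtype.ext) fun u hu => ?_
  · exact mem_filter.mpr ⟨x.2, by simpa using hx⟩
  · obtain ⟨hus, hvu⟩ := mem_filter.mp hu
    exact ⟨⟨u, hus⟩, by simpa using hvu, rfl⟩

lemma isTree_induce_erase {s : Finset V} {a : V} (ha : a ∈ s)
    (hT : (G.induce (s : Set V)).IsTree) (hleaf : #(s.filter (G.Adj a)) = 1) :
    (G.induce (s.erase a : Set V)).IsTree := by
  have hdeg := (degree_induce_eq_card_filter s ha).trans hleaf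
  let φ : (G.induce (s : Set V)).induce {⟨a, ha⟩}ᶜ →g G.induce (s.erase a : Set V) :=
    ⟨fun x => ⟨x.1.1, mem_erase.mpr ⟨fun h => x.2 (Subtype.ext h), x.1.2⟩⟩, fun h => h⟩
  have hφ : Function.Surjective φ := fun y => by
    obtain ⟨hya, hys⟩ := mem_erase.mp y.2
    exact ⟨⟨⟨y.1, hys⟩, fun h => hya (congrArg Subtype.val h)⟩, rfl⟩
  refine ⟨(hT.connected.induce_compl_singleton_of_degree_eq_one hdeg).map φ hφ, ?_⟩
  exact hT.isAcyclic.embedding (G.induceHomOfLE (by simp))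

end SimpleGraph

def IsOddInducedTree {V : Type*} (G : SimpleGraph V) (s : Finset V) : Prop :=
  (G.induce (s : Set V)).IsTree ∧ ∀ v ∈ s, Odd #(s.filter (G.Adj v))

structure IsCherry {V : Type*} (G : SimpleGraph V) (s : Finset V) (v a b : V) : Prop where
  left_mem : a ∈ s
  right_mem : b ∈ s
  ne : a ≠ b
  filter_left : s.filter (G.Adj a) = {v}
  filter_right : s.filter (G.Adj b) = {v}

namespace IsCherry

variable {V : Type*} {G : SimpleGraph V} {s : Finset V} {v a b : V}

lemma symm (hc : IsCherry G s v a b) : IsCherry G s v b a :=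
  ⟨hc.right_mem, hc.left_mem, hc.ne.symm, hc.filter_right, hc.filter_left⟩

lemma adj_left (hc : IsCherry G s v a b) : G.Adj v a :=
  (mem_filter.mp (hc.filter_left ▸ mem_singleton_self v)).2.symm

lemma center_mem (hc : IsCherry G s v a b) : v ∈ s :=
  (mem_filter.mp (hc.filter_left ▸ mem_singleton_self v)).1

lemma eq_of_adj_left (hc : IsCherry G s v a b) {u : V} (hu : u ∈ s) (hau : G.Adj a u) :
    u = v := by
  simpa [hc.filter_left] using mem_filter.mpr ⟨hu, hau⟩

lemma not_adj (hc : IsCherry G s v a b) : ¬ G.Adj a b := fun hab =>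
  G.ne_of_adj hc.symm.adj_left (hc.eq_of_adj_left hc.right_mem hab).symm

end IsCherry

namespace IsOddInducedTree

variable {V : Type*} {G : SimpleGraph V} {s : Finset V}

lemma odd_degree (h : IsOddInducedTree G s) (v : (s : Set V)) :
    Odd ((G.induce (s : Set V)).degree v) := by
  rw [degree_induce_eq_card_filter s v.2]
  exact h.2 v v.2

lemma even_card (h : IsOddInducedTree G s) : Even #s := by
  simpa using even_card_of_forall_odd_degree h.odd_degree

lemma exists_cherry (h : IsOddInducedTree G s) (hs : 2 < #s) {r : V} (hr : r ∈ s) :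
    ∃ v a b, IsCherry G s v a b ∧ a ≠ r ∧ b ≠ r := by
  obtain ⟨v, a, b, hab, har, hbr, hva, hvb, hda, hdb⟩ :=
    h.1.exists_adj_leaves h.odd_degree (by simpa using hs) ⟨r, hr⟩
  have hleaf : ∀ u : (s : Set V), (G.induce (s : Set V)).Adj v u →
      (G.induce (s : Set V)).degree u = 1 → s.filter (G.Adj u) = {v.1} := by
    intro u hvu hdu
    rw [degree_induce_eq_card_filter s u.2] at hdu
    obtain ⟨x, hx⟩ := card_eq_one.mp hdu
    have hv : v.1 ∈ s.filter (G.Adj u) := mem_filter.mpr ⟨v.2, hvu.symm⟩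
    rw [hx, mem_singleton] at hv
    rw [hx, hv]
  exact ⟨v, a, b, ⟨a.2, b.2, fun h => hab (Subtype.ext h), hleaf a hva hda, hleaf b hvb hdb⟩,
    fun h => har (Subtype.ext h), fun h => hbr (Subtype.ext h)⟩

lemma erase_cherry (h : IsOddInducedTree G s) {v a b : V} (hc : IsCherry G s v a b) :
    IsOddInducedTree G ((s.erase a).erase b) := by
  refine ⟨isTree_induce_erase (mem_erase.mpr ⟨hc.ne.symm, hc.right_mem⟩)
    (isTree_induce_erase hc.left_mem h.1 (by rw [hc.filter_left, card_singleton])) ?_,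
    fun u hu => ?_⟩
  · have hva : a ∉ ({v} : Finset V) := by simpa using (G.ne_of_adj hc.adj_left).symm
    rw [filter_erase, hc.filter_right, erase_eq_of_notMem hva, card_singleton]
  obtain ⟨-, -, hus⟩ : u ≠ b ∧ u ≠ a ∧ u ∈ s := by simpa using hu
  rw [filter_erase, filter_erase]
  by_cases huv : u = v
  · subst huv
    have hma : a ∈ s.filter (G.Adj u) := mem_filter.mpr ⟨hc.left_mem, hc.adj_left⟩
    have hmb : b ∈ (s.filter (G.Adj u)).erase a :=
      mem_erase.mpr ⟨hc.ne.symm, mem_filter.mpr ⟨hc.right_mem, hc.symm.adj_left⟩⟩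
    have h2 : 1 < #(s.filter (G.Adj u)) :=
      one_lt_card.mpr ⟨a, hma, b, mem_of_mem_erase hmb, hc.ne⟩
    rw [card_erase_of_mem hmb, card_erase_of_mem hma]
    obtain ⟨k, hk⟩ := h.2 u hus
    exact ⟨k - 1, by omega⟩
  · have hna : a ∉ s.filter (G.Adj u) := fun hm =>
      huv (hc.eq_of_adj_left hus (mem_filter.mp hm).2.symm)
    have hnb : b ∉ s.filter (G.Adj u) := fun hm =>
      huv (hc.symm.eq_of_adj_left hus (mem_filter.mp hm).2.symm)
    rw [erase_eq_of_notMem hna, erase_eq_of_notMem hnb]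
    exact h.2 u hus

lemma exists_starGraph_embedding (h : IsOddInducedTree G s) (hs : #s = 4) :
    ∃ f : starGraph (0 : Fin 4) ↪g G, Set.range f = s := by
  obtain ⟨c, hc⟩ := h.1.eq_starGraph_of_card_eq_four h.odd_degree (by simpa using hs)
  let e₀ : Fin 4 ≃ (s : Set V) := (Fintype.equivFinOfCardEq (by simpa using hs)).symm
  let e : Fin 4 ≃ (s : Set V) := e₀.trans (Equiv.swap (e₀ 0) c)
  have he : e 0 = c := Equiv.swap_apply_left _ _
  let φ : starGraph (0 : Fin 4) ≃g G.induce (s : Set V) :=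
    ⟨e, fun {i j} => by
      rw [hc, starGraph_adj, starGraph_adj, e.injective.ne_iff, ← he, e.injective.eq_iff,
        e.injective.eq_iff]⟩
  refine ⟨(Embedding.induce _).comp φ.toEmbedding, ?_⟩
  ext x
  refine ⟨fun ⟨i, hi⟩ => hi ▸ (e i).2, fun hx => ⟨e.symm ⟨x, hx⟩, ?_⟩⟩
  show (e (e.symm ⟨x, hx⟩) : V) = x
  rw [e.apply_symm_apply]

lemma exists_flip_word_of_card_eq_four (h : IsOddInducedTree G s) (hs : #s = 4) {r : V}
    (hr : r ∈ s) (β : V → ℤˣ) :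
    ∃ w : List V, (∀ x ∈ w, x ∈ s) ∧ w.length = 4 * #s - 4 ∧
      invSeq (G, β) w = flipOn (G, β) (s : Set V) ∧ w.getLast? = some r := by
  obtain ⟨f, hf⟩ := h.exists_starGraph_embedding hs
  obtain ⟨k, rfl⟩ : r ∈ Set.range f := hf ▸ hr
  obtain ⟨w, hws, hlen, hinv, hlast⟩ := exists_flip_word_starGraph_four f β k
  rw [hf] at hws hinv
  exact ⟨w, hws, by rw [hlen, hs], hinv, hlast⟩

theorem exists_flip_word (h : IsOddInducedTree G s) (hs : 4 ≤ #s) {r : V} (hr : r ∈ s)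
    (β : V → ℤˣ) :
    ∃ w : List V, (∀ x ∈ w, x ∈ s) ∧ w.length = 4 * #s - 4 ∧
      invSeq (G, β) w = flipOn (G, β) (s : Set V) ∧ w.getLast? = some r := by
  induction hn : #s using Nat.strong_induction_on generalizing s β with
  | _ n ih =>
  subst hn
  rcases hs.eq_or_lt with h4 | h5
  · exact h.exists_flip_word_of_card_eq_four h4.symm hr β
  obtain ⟨v, a, b, hc, har, hbr⟩ := h.exists_cherry (by omega) hr
  have hcard : #((s.erase a).erase b) + 2 = #s := by
    rw [card_erase_of_mem (mem_erase.mpr ⟨hc.ne.symm, hc.right_mem⟩),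
      card_erase_of_mem hc.left_mem]
    omega
  have h6 : 6 ≤ #s := by obtain ⟨k, hk⟩ := h.even_card; omega
  obtain ⟨w, hws, hlen, hinv, hlast⟩ := ih _ (by omega) (h.erase_cherry hc) (by omega)
    (by simp [hr, har.symm, hbr.symm]) (flipOn (G, β) {a, b}).2 rfl
  refine ⟨[v, a, b, a, b, a, b, v] ++ w, fun x hx => ?_, by simp [hlen]; omega, ?_, ?_⟩
  · rcases List.mem_append.mp hx with hx | hx
    · simp only [List.mem_cons, List.not_mem_nil, or_false] at hx
      rcases hx with rfl | rfl | rfl | rfl | rfl | rfl | rfl | rfl <;>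
        simp [hc.center_mem, hc.left_mem, hc.right_mem]
    · exact mem_of_mem_erase (mem_of_mem_erase (hws x hx))
  · rw [invSeq_append, invSeq_cherry hc.adj_left hc.symm.adj_left hc.ne hc.not_adj]
    refine hinv.trans ((flipOn_flipOn (G, β) (S := {a, b}) ?_).trans ?_)
    · simp [Set.disjoint_left]
    · congr 1
      ext x
      by_cases hxa : x = a <;> by_cases hxb : x = b <;> simp [hxa, hxb, hc.left_mem, hc.right_mem]
  · rw [List.getLast?_append_of_ne_nil _ (List.ne_nil_of_length_pos (by omega)), hlast]

end IsOddInducedTree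

theorem stmt12_general {V : Type*} (G : SimpleGraph V)
    (s : Finset V) (hcard : 4 ≤ s.card)
    (htree : (G.induce (s : Set V)).IsTree)
    (hodd : ∀ v ∈ s, Odd ((s.filter (fun u => G.Adj v u)).card))
    (r : V) (hr : r ∈ s) (β : V → ℤˣ) :
    ∃ w : List V, (∀ x ∈ w, x ∈ s) ∧ w.length = 4 * s.card - 4 ∧
      invSeq (G, β) w = flipOn (G, β) (s : Set V) ∧ w.getLast? = some r :=
  IsOddInducedTree.exists_flip_word ⟨htree, hodd⟩ hcard hr β

/-- Color-reversing an induced odd subtree `T` (on vertex set `s`, with at least 4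
vertices) of `G` via a string of length `4|V(T)| - 4` over `V(T)` ending at a
prescribed vertex `r`. -/
theorem stmt12 {V : Type*} [Fintype V] [DecidableEq V] (G : SimpleGraph V)
    (s : Finset V) (hcard : 4 ≤ s.card)
    (htree : (G.induce (s : Set V)).IsTree)
    (hodd : ∀ v ∈ s, Odd ((s.filter (fun u => G.Adj v u)).card))
    (r : V) (hr : r ∈ s) (β : V → ℤˣ) :
    ∃ w : List V, (∀ x ∈ w, x ∈ s) ∧ w.length = 4 * s.card - 4 ∧
      invSeq (G, β) w = flipOn (G, β) (s : Set V) ∧ w.getLast? = some r :=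
  stmt12_general G s hcard htree hodd r hr β
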